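/- Let 1 ≤ r ≤ ∞. There exists a constant C > 0 such that for every t > 0, ‖ δ⁺G_{t,1} ‖_{ℓ^r(ℤ)} ≤ C · t^{−1/2 − (1 − 1/r)/2}, where δ⁺g(n) = g(n+1) − g(n). -/

import Mathlib

/-!
For `n ≥ 0` the identity `cos((n+1)θ) - cos(nθ) = -2 sin(θ/2) sin((n+1/2)θ)` gives
`δ⁺G(n) = -(2/π) ∫₀^π w(θ) sin((n+1/2)θ) dθ` with `w(θ) = e^{2t(cos θ - 1)} sin(θ/2)`,
and `G` is even in `n`. Since `2t(cos θ - 1) ≤ -4tθ²/π²`, Gaussian moments bound this by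
`1/(2t)`; after two integrations by parts (the boundary terms vanish because
`w(0) = w'(π) = cos((n+1/2)π) = 0`) the same moments give `|δ⁺G(n)| ≤ 30/(n+1)²` uniformly
in `t`. Splitting the sum at `n ≈ √t` yields `‖δ⁺G‖₁ ≲ t^{-1/2}`, and
`‖f‖_r ≤ ‖f‖_∞^{1-1/r} ‖f‖_1^{1/r}` interpolates this with `‖δ⁺G‖_∞ ≤ 1/(2t)`.
-/

open scoped ENNReal

/-- The modified Bessel function of the first kind of integer order `m`. -/
noncomputable def besselIZ (m : ℤ) (t : ℝ) : ℝ :=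
  (1 / Real.pi) * ∫ θ in (0 : ℝ)..Real.pi, Real.exp (t * Real.cos θ) * Real.cos ((m : ℝ) * θ)

/-- The one-dimensional discrete heat kernel. -/
noncomputable def heatKernel1 (t : ℝ) (n : ℤ) : ℝ := Real.exp (-2 * t) * besselIZ n (2 * t)

/-- The `ℓ^p` norm (valued in `ℝ≥0∞`) of a sequence, `1 ≤ p ≤ ∞`. -/
noncomputable def lpNorm {ι : Type*} (p : ℝ≥0∞) (f : ι → ℝ) : ℝ≥0∞ :=
  if p = ∞ then ⨆ n, (‖f n‖₊ : ℝ≥0∞)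
  else (∑' n, (‖f n‖₊ : ℝ≥0∞) ^ p.toReal) ^ (1 / p.toReal)

open Real intervalIntegral

theorem integral_mul_sin_nat_add_half_mul_eq {g g' g'' : ℝ → ℝ}
    (hg : ∀ x, HasDerivAt g (g' x) x) (hg' : ∀ x, HasDerivAt g' (g'' x) x)
    (hg'' : Continuous g'') (h0 : g 0 = 0) (hπ : g' π = 0) (n : ℕ) :
    ∫ x in (0 : ℝ)..π, g x * sin ((n + 1 / 2) * x) =
      -(∫ x in (0 : ℝ)..π, g'' x * sin ((n + 1 / 2) * x)) / (n + 1 / 2) ^ 2 := by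
  set ν : ℝ := n + 1 / 2
  have hν : ν ≠ 0 := by positivity
  have hcos : cos (ν * π) = 0 := by
    rw [show ν * π = n * π + π / 2 by ring, cos_add, cos_pi_div_two, sin_pi_div_two,
      sin_nat_mul_pi]
    ring
  have hcont : Continuous g := continuous_iff_continuousAt.2 fun x ↦ (hg x).continuousAt
  have hΦ : ∀ x ∈ Set.uIcc (0 : ℝ) π, HasDerivAt
      (fun x ↦ -(g x * cos (ν * x) / ν) + g' x * sin (ν * x) / ν ^ 2)
      (g x * sin (ν * x) + g'' x * sin (ν * x) / ν ^ 2) x := by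
    intro x _
    have hc : HasDerivAt (fun x ↦ cos (ν * x)) (-sin (ν * x) * ν) x := by
      simpa using ((hasDerivAt_id' x).const_mul ν).cos
    have hs : HasDerivAt (fun x ↦ sin (ν * x)) (cos (ν * x) * ν) x := by
      simpa using ((hasDerivAt_id' x).const_mul ν).sin
    refine ((((hg x).mul hc).div_const ν).neg.add
      (((hg' x).mul hs).div_const (ν ^ 2))).congr_deriv ?_
    field_simp
    ring
  have hint : IntervalIntegrable (fun x ↦ g x * sin (ν * x) + g'' x * sin (ν * x) / ν ^ 2)
      MeasureTheory.volume 0 π := by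
    apply Continuous.intervalIntegrable; fun_prop
  have key := integral_eq_sub_of_hasDerivAt hΦ hint
  rw [integral_add (by apply Continuous.intervalIntegrable; fun_prop)
    (by apply Continuous.intervalIntegrable; fun_prop), integral_div] at key
  simp only [hcos, hπ, h0, mul_zero, zero_mul, zero_div, sin_zero, neg_zero, add_zero,
    sub_zero] at key
  rw [eq_div_iff (pow_ne_zero 2 hν)]
  field_simp at key
  linarith

lemma abs_integral_mul_sin_le {g : ℝ → ℝ} {a b : ℝ} (hab : a ≤ b)
    (hg : IntervalIntegrable g MeasureTheory.volume a b) (ν : ℝ) :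
    |∫ x in a..b, g x * sin (ν * x)| ≤ ∫ x in a..b, |g x| := by
  rw [← Real.norm_eq_abs]
  refine norm_integral_le_of_norm_le hab (.of_forall fun x _ ↦ ?_) hg.abs
  rw [Real.norm_eq_abs, abs_mul]
  exact mul_le_of_le_one_right (abs_nonneg _) (abs_sin_le_one _)

lemma two_mul_mul_cos_sub_one_le {t θ : ℝ} (ht : 0 ≤ t) (hθ : |θ| ≤ π) :
    2 * t * (cos θ - 1) ≤ -(4 * t / π ^ 2 * θ ^ 2) := by
  calc 2 * t * (cos θ - 1) ≤ 2 * t * (-(2 / π ^ 2 * θ ^ 2)) := by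
        gcongr
        linarith [cos_le_one_sub_mul_cos_sq hθ]
    _ = -(4 * t / π ^ 2 * θ ^ 2) := by ring

lemma integral_exp_neg_mul_sq_mul_le {a : ℝ} (ha : 0 < a) (b : ℝ) :
    ∫ x in (0 : ℝ)..b, exp (-(a * x ^ 2)) * x ≤ 1 / (2 * a) := by
  have hderiv : ∀ x ∈ Set.uIcc 0 b,
      HasDerivAt (fun x ↦ -exp (-(a * x ^ 2)) / (2 * a)) (exp (-(a * x ^ 2)) * x) x := by
    intro x _
    refine (((((hasDerivAt_pow 2 x).const_mul a).fun_neg).exp).neg.div_const (2 * a)).congr_deriv ?_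
    field_simp
    ring
  rw [integral_eq_sub_of_hasDerivAt hderiv (by apply Continuous.intervalIntegrable; fun_prop)]
  have := exp_pos (-(a * b ^ 2))
  simp only [zero_pow two_ne_zero, mul_zero, neg_zero, exp_zero]
  rw [div_sub_div_same, div_le_div_iff_of_pos_right (by positivity)]
  linarith

lemma integral_exp_neg_mul_sq_mul_pow_three_le {a : ℝ} (ha : 0 < a) (b : ℝ) :
    ∫ x in (0 : ℝ)..b, exp (-(a * x ^ 2)) * x ^ 3 ≤ 1 / (2 * a ^ 2) := by
  have hderiv : ∀ x ∈ Set.uIcc 0 b, HasDerivAt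
      (fun x ↦ -((a * x ^ 2 + 1) * exp (-(a * x ^ 2))) / (2 * a ^ 2))
      (exp (-(a * x ^ 2)) * x ^ 3) x := by
    intro x _
    have hq := (hasDerivAt_pow 2 x).const_mul a
    refine (((hq.add_const 1).mul hq.fun_neg.exp).neg.div_const (2 * a ^ 2)).congr_deriv ?_
    field_simp
    ring
  rw [integral_eq_sub_of_hasDerivAt hderiv (by apply Continuous.intervalIntegrable; fun_prop)]
  have := mul_pos (by positivity : 0 < a * b ^ 2 + 1) (exp_pos (-(a * b ^ 2)))
  simp only [zero_pow two_ne_zero, mul_zero, neg_zero, exp_zero, zero_add, one_mul]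
  rw [div_sub_div_same, div_le_div_iff_of_pos_right (by positivity)]
  linarith

lemma sum_range_one_div_add_one_sq_le (N m : ℕ) :
    ∑ i ∈ Finset.range m, (1 : ℝ) / (N + i + 1) ^ 2 ≤ 2 / ((N : ℝ) + 1) := by
  have htel : ∀ i : ℕ, (1 : ℝ) / (N + i + 1) ^ 2 ≤ 2 / (N + i + 1) - 2 / (N + (i + 1 : ℕ) + 1) := by
    intro i
    push_cast
    rw [div_sub_div _ _ (by positivity) (by positivity), div_le_div_iff₀ (by positivity)
      (by positivity)]
    nlinarith [(i.cast_nonneg : (0 : ℝ) ≤ i), (N.cast_nonneg : (0 : ℝ) ≤ N)]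
  calc _ ≤ ∑ i ∈ Finset.range m, (2 / (N + i + 1 : ℝ) - 2 / (N + (i + 1 : ℕ) + 1)) :=
        Finset.sum_le_sum fun i _ ↦ htel i
    _ = 2 / (N + 1) - 2 / (N + m + 1) := by
        rw [Finset.sum_range_sub' (fun i : ℕ ↦ 2 / (N + i + 1 : ℝ))]
        simp
    _ ≤ 2 / (N + 1) := sub_le_self _ (by positivity)

lemma sum_range_le_of_le_of_le_div_sq {a : ℕ → ℝ} {A B : ℝ} (ha : ∀ n, 0 ≤ a n)
    (hA : ∀ n, a n ≤ A) (hB : ∀ n, a n ≤ B / (n + 1) ^ 2) (N m : ℕ) :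
    ∑ i ∈ Finset.range m, a i ≤ N * A + 2 * B / (N + 1) := by
  have hB₀ : 0 ≤ B := by simpa using (ha 0).trans (hB 0)
  calc ∑ i ∈ Finset.range m, a i ≤ ∑ i ∈ Finset.range (N + m), a i :=
        Finset.sum_le_sum_of_subset_of_nonneg (Finset.range_mono (by omega)) fun i _ _ ↦ ha i
    _ = ∑ i ∈ Finset.range N, a i + ∑ i ∈ Finset.range m, a (N + i) := Finset.sum_range_add ..
    _ ≤ ∑ i ∈ Finset.range N, A + ∑ i ∈ Finset.range m, B * ((1 : ℝ) / (N + i + 1) ^ 2) := by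
        gcongr with i _ i _
        · exact hA i
        · simpa [div_eq_mul_inv] using hB (N + i)
    _ ≤ N * A + B * (2 / (N + 1)) := by
        rw [Finset.sum_const, Finset.card_range, nsmul_eq_mul, ← Finset.mul_sum]
        gcongr
        exact sum_range_one_div_add_one_sq_le N m
    _ = N * A + 2 * B / (N + 1) := by ring

section LpNorm

variable {ι : Type*} (f : ι → ℝ)

lemma lpNorm_top : lpNorm ∞ f = ⨆ n, ‖f n‖ₑ := by
  simp only [lpNorm, if_pos, enorm_eq_nnnorm]

lemma lpNorm_one : lpNorm 1 f = ∑' n, ‖f n‖ₑ := by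
  simp [lpNorm, enorm_eq_nnnorm]

theorem lpNorm_le_lpNorm_top_rpow_mul_lpNorm_one_rpow {r : ℝ≥0∞} (hr : 1 ≤ r) :
    lpNorm r f ≤ lpNorm ∞ f ^ (1 - r⁻¹.toReal) * lpNorm 1 f ^ r⁻¹.toReal := by
  rcases eq_or_ne r ∞ with rfl | hr_top
  · simp
  set p := r.toReal
  have hp : 1 ≤ p := by simpa using ENNReal.toReal_mono hr_top hr
  set M := ⨆ n, ‖f n‖ₑ
  have hterm : ∀ n, ‖f n‖ₑ ^ p ≤ M ^ (p - 1) * ‖f n‖ₑ := fun n ↦ by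
    calc ‖f n‖ₑ ^ p = ‖f n‖ₑ ^ (p - 1) * ‖f n‖ₑ ^ (1 : ℝ) := by
          rw [← ENNReal.rpow_add_of_nonneg _ _ (by linarith) zero_le_one, sub_add_cancel]
      _ ≤ M ^ (p - 1) * ‖f n‖ₑ := by
          rw [ENNReal.rpow_one]
          gcongr
          exact le_iSup (fun n ↦ ‖f n‖ₑ) n
  rw [lpNorm, if_neg hr_top, lpNorm_top, lpNorm_one, ENNReal.toReal_inv]
  simp only [← enorm_eq_nnnorm]
  calc (∑' n, ‖f n‖ₑ ^ p) ^ (1 / p) ≤ (M ^ (p - 1) * ∑' n, ‖f n‖ₑ) ^ (1 / p) := by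
        rw [← ENNReal.tsum_mul_left]
        gcongr with n
        exact hterm n
    _ = M ^ (1 - p⁻¹) * (∑' n, ‖f n‖ₑ) ^ p⁻¹ := by
        rw [ENNReal.mul_rpow_of_nonneg _ _ (by positivity), ← ENNReal.rpow_mul, one_div]
        congr 2
        field_simp

end LpNorm

lemma ofReal_one_div_two_mul_rpow_mul_ofReal_div_sqrt_rpow_le {t q C : ℝ} (ht : 0 < t)
    (hq₀ : 0 ≤ q) (hq₁ : q ≤ 1) (hC : 1 ≤ C) :
    ENNReal.ofReal (1 / (2 * t)) ^ (1 - q) * ENNReal.ofReal (C / √t) ^ q ≤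
      ENNReal.ofReal (C * t ^ (-(1 / 2 : ℝ) - (1 - q) / 2)) := by
  rw [ENNReal.ofReal_rpow_of_nonneg (by positivity) (by linarith),
    ENNReal.ofReal_rpow_of_nonneg (by positivity) hq₀, ← ENNReal.ofReal_mul (by positivity)]
  apply ENNReal.ofReal_le_ofReal
  have h₁ : (1 / (2 * t)) ^ (1 - q) ≤ t ^ (-(1 - q)) := by
    rw [one_div, inv_rpow (by positivity), mul_rpow zero_le_two ht.le, rpow_neg ht.le]
    gcongr
    exact le_mul_of_one_le_left (by positivity) (one_le_rpow one_le_two (by linarith))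
  have h₂ : (C / √t) ^ q ≤ C * t ^ (-(q / 2)) := by
    rw [div_rpow (by positivity) (sqrt_nonneg t), sqrt_eq_rpow, ← rpow_mul ht.le, rpow_neg ht.le,
      div_eq_mul_inv, one_div_mul_eq_div]
    gcongr
    simpa using rpow_le_rpow_of_exponent_le hC hq₁
  calc (1 / (2 * t)) ^ (1 - q) * (C / √t) ^ q ≤ t ^ (-(1 - q)) * (C * t ^ (-(q / 2))) := by
        gcongr
    _ = C * t ^ (-(1 / 2 : ℝ) - (1 - q) / 2) := by
        rw [mul_left_comm, ← rpow_add ht]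
        ring_nf

noncomputable def heatWeight (t θ : ℝ) : ℝ := exp (2 * t * (cos θ - 1)) * sin (θ / 2)

noncomputable def heatWeightDeriv (t θ : ℝ) : ℝ :=
  exp (2 * t * (cos θ - 1)) * (cos (θ / 2) / 2 - 2 * t * sin θ * sin (θ / 2))

noncomputable def heatWeightDeriv2 (t θ : ℝ) : ℝ :=
  exp (2 * t * (cos θ - 1)) * sin (θ / 2) *
    (16 * t ^ 2 * sin (θ / 2) ^ 2 * cos (θ / 2) ^ 2 - 1 / 4 -
      2 * t * (3 * cos (θ / 2) ^ 2 - sin (θ / 2) ^ 2))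

lemma hasDerivAt_exp_two_mul_cos_sub_one (t θ : ℝ) :
    HasDerivAt (fun θ ↦ exp (2 * t * (cos θ - 1)))
      (exp (2 * t * (cos θ - 1)) * (-(2 * t * sin θ))) θ := by
  convert (((hasDerivAt_cos θ).sub_const 1).const_mul (2 * t)).exp using 1
  ring

lemma hasDerivAt_heatWeight (t θ : ℝ) : HasDerivAt (heatWeight t) (heatWeightDeriv t θ) θ := by
  have hs : HasDerivAt (fun θ ↦ sin (θ / 2)) (cos (θ / 2) * (1 / 2)) θ := by
    simpa using ((hasDerivAt_id' θ).div_const 2).sin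
  refine ((hasDerivAt_exp_two_mul_cos_sub_one t θ).mul hs).congr_deriv ?_
  unfold heatWeightDeriv
  ring

lemma hasDerivAt_heatWeightDeriv (t θ : ℝ) :
    HasDerivAt (heatWeightDeriv t) (heatWeightDeriv2 t θ) θ := by
  have hs : HasDerivAt (fun θ ↦ sin (θ / 2)) (cos (θ / 2) * (1 / 2)) θ := by
    simpa using ((hasDerivAt_id' θ).div_const 2).sin
  have hc : HasDerivAt (fun θ ↦ cos (θ / 2)) (-sin (θ / 2) * (1 / 2)) θ := by
    simpa using ((hasDerivAt_id' θ).div_const 2).cos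
  refine ((hasDerivAt_exp_two_mul_cos_sub_one t θ).mul
    ((hc.div_const 2).fun_sub (((hasDerivAt_sin θ).const_mul (2 * t)).fun_mul hs))).congr_deriv ?_
  have hsin : sin θ = 2 * sin (θ / 2) * cos (θ / 2) := by
    rw [← sin_two_mul, mul_div_cancel₀ _ two_ne_zero]
  have hcos : cos θ = cos (θ / 2) ^ 2 - sin (θ / 2) ^ 2 := by
    rw [← cos_two_mul', mul_div_cancel₀ _ two_ne_zero]
  unfold heatWeightDeriv2
  rw [hsin, hcos]
  ring

lemma continuous_heatWeight (t : ℝ) : Continuous (heatWeight t) := by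
  unfold heatWeight; fun_prop

lemma continuous_heatWeightDeriv2 (t : ℝ) : Continuous (heatWeightDeriv2 t) := by
  unfold heatWeightDeriv2; fun_prop

lemma heatKernel1_natCast_succ_sub (t : ℝ) (n : ℕ) :
    heatKernel1 t (n + 1) - heatKernel1 t n =
      -(2 / π) * ∫ θ in (0 : ℝ)..π, heatWeight t θ * sin ((n + 1 / 2) * θ) := by
  have hpt : ∀ θ : ℝ, exp (-2 * t) * (exp (2 * t * cos θ) * cos ((n + 1 : ℝ) * θ)) -
      exp (-2 * t) * (exp (2 * t * cos θ) * cos (n * θ)) =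
      -2 * (heatWeight t θ * sin ((n + 1 / 2) * θ)) := by
    intro θ
    rw [← mul_sub, ← mul_sub, cos_sub_cos, ← mul_assoc, ← exp_add, heatWeight]
    ring_nf
  have hint : ∀ m : ℝ, IntervalIntegrable (fun θ ↦ exp (2 * t * cos θ) * cos (m * θ))
      MeasureTheory.volume 0 π := fun m ↦ by apply Continuous.intervalIntegrable; fun_prop
  unfold heatKernel1 besselIZ
  push_cast
  calc _ = 1 / π * ∫ θ in (0 : ℝ)..π, exp (-2 * t) * (exp (2 * t * cos θ) * cos ((n + 1 : ℝ) * θ))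
        - exp (-2 * t) * (exp (2 * t * cos θ) * cos (n * θ)) := by
        rw [integral_sub ((hint _).const_mul _) ((hint _).const_mul _), integral_const_mul,
          integral_const_mul]
        ring
    _ = 1 / π * ∫ θ in (0 : ℝ)..π, -2 * (heatWeight t θ * sin ((n + 1 / 2) * θ)) := by
        rw [integral_congr fun θ _ ↦ hpt θ]
    _ = _ := by
        rw [integral_const_mul]
        ring

lemma besselIZ_neg (m : ℤ) (t : ℝ) : besselIZ (-m) t = besselIZ m t := by
  simp only [besselIZ, Int.cast_neg, neg_mul, cos_neg]

lemma heatKernel1_neg (t : ℝ) (n : ℤ) : heatKernel1 t (-n) = heatKernel1 t n := by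
  rw [heatKernel1, besselIZ_neg, heatKernel1]

lemma heatKernel1_succ_sub_neg_succ (t : ℝ) (n : ℤ) :
    heatKernel1 t (-(n + 1) + 1) - heatKernel1 t (-(n + 1)) =
      -(heatKernel1 t (n + 1) - heatKernel1 t n) := by
  rw [show -(n + 1) + 1 = -n by ring, heatKernel1_neg, heatKernel1_neg]
  ring

section HeatWeightBounds

variable {t θ : ℝ}

lemma abs_heatWeight_le (ht : 0 ≤ t) (hθ₀ : 0 ≤ θ) (hθπ : θ ≤ π) :
    |heatWeight t θ| ≤ exp (-(4 * t / π ^ 2 * θ ^ 2)) * (θ / 2) := by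
  have hs₀ : 0 ≤ sin (θ / 2) := sin_nonneg_of_nonneg_of_le_pi (by linarith) (by linarith)
  rw [heatWeight, abs_of_nonneg (by positivity)]
  gcongr
  · exact two_mul_mul_cos_sub_one_le ht (abs_le.2 ⟨by linarith, hθπ⟩)
  · exact sin_le (by linarith)

lemma abs_heatWeightDeriv2_le (ht : 0 ≤ t) (hθ₀ : 0 ≤ θ) (hθπ : θ ≤ π) :
    |heatWeightDeriv2 t θ| ≤
      exp (-(4 * t / π ^ 2 * θ ^ 2)) * (1 / 4 + 3 * t * θ + 2 * t ^ 2 * θ ^ 3) := by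
  set s := sin (θ / 2)
  set c := cos (θ / 2)
  have hs₀ : 0 ≤ s := sin_nonneg_of_nonneg_of_le_pi (by linarith) (by linarith)
  have hs₁ : s ≤ 1 := sin_le_one _
  have hsθ : s ≤ θ / 2 := sin_le (by linarith)
  have hc : c ^ 2 = 1 - s ^ 2 := by linarith [sin_sq_add_cos_sq (θ / 2)]
  have hbracket : |16 * t ^ 2 * s ^ 2 * c ^ 2 - 1 / 4 - 2 * t * (3 * c ^ 2 - s ^ 2)| ≤
      1 / 4 + 6 * t + 16 * t ^ 2 * s ^ 2 := by
    have hs2 : s ^ 2 ≤ 1 := by nlinarith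
    have : 0 ≤ t ^ 2 * s ^ 2 * (1 - s ^ 2) := by
      apply mul_nonneg (by positivity); linarith
    rw [hc, abs_le]
    constructor <;> nlinarith [mul_nonneg ht (sq_nonneg s), mul_nonneg ht (sub_nonneg.2 hs2),
      pow_nonneg (mul_nonneg ht (sq_nonneg s)) 2]
  have hpoly :
      s * (1 / 4 + 6 * t + 16 * t ^ 2 * s ^ 2) ≤ 1 / 4 + 3 * t * θ + 2 * t ^ 2 * θ ^ 3 := by
    have : s ^ 3 ≤ (θ / 2) ^ 3 := pow_le_pow_left₀ hs₀ hsθ 3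
    nlinarith [mul_le_mul_of_nonneg_left hsθ ht, mul_le_mul_of_nonneg_left this (sq_nonneg t)]
  rw [heatWeightDeriv2, abs_mul, abs_mul, abs_of_pos (exp_pos _), abs_of_nonneg hs₀, mul_assoc]
  gcongr
  · exact two_mul_mul_cos_sub_one_le ht (abs_le.2 ⟨by linarith, hθπ⟩)
  · exact (mul_le_mul_of_nonneg_left hbracket hs₀).trans hpoly

end HeatWeightBounds

section HeatKernelDifference

variable {t : ℝ}

lemma integral_abs_heatWeight_le (ht : 0 < t) :
    ∫ θ in (0 : ℝ)..π, |heatWeight t θ| ≤ π ^ 2 / (16 * t) := by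
  have ha : 0 < 4 * t / π ^ 2 := by positivity
  calc ∫ θ in (0 : ℝ)..π, |heatWeight t θ|
      ≤ ∫ θ in (0 : ℝ)..π, exp (-(4 * t / π ^ 2 * θ ^ 2)) * θ / 2 := by
        refine integral_mono_on pi_pos.le ((continuous_heatWeight t).abs.intervalIntegrable 0 π)
          (by apply Continuous.intervalIntegrable; fun_prop) fun θ hθ ↦ ?_
        rw [mul_div_assoc]
        exact abs_heatWeight_le ht.le hθ.1 hθ.2
    _ ≤ 1 / (2 * (4 * t / π ^ 2)) / 2 := by
        rw [integral_div]
        gcongr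
        exact integral_exp_neg_mul_sq_mul_le ha π
    _ = π ^ 2 / (16 * t) := by
        field_simp
        ring

lemma integral_abs_heatWeightDeriv2_le (ht : 0 < t) :
    ∫ θ in (0 : ℝ)..π, |heatWeightDeriv2 t θ| ≤ 11 := by
  set a := 4 * t / π ^ 2
  have ha : 0 < a := by positivity
  have hint : ∀ k : ℕ, IntervalIntegrable (fun θ ↦ exp (-(a * θ ^ 2)) * θ ^ k)
      MeasureTheory.volume 0 π := fun k ↦ by apply Continuous.intervalIntegrable; fun_prop
  calc ∫ θ in (0 : ℝ)..π, |heatWeightDeriv2 t θ|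
      ≤ ∫ θ in (0 : ℝ)..π, 1 / 4 + 3 * t * (exp (-(a * θ ^ 2)) * θ ^ 1)
          + 2 * t ^ 2 * (exp (-(a * θ ^ 2)) * θ ^ 3) := by
        refine integral_mono_on pi_pos.le
          ((continuous_heatWeightDeriv2 t).abs.intervalIntegrable 0 π)
          (by apply Continuous.intervalIntegrable; fun_prop) fun θ hθ ↦ ?_
        have hexp : exp (-(a * θ ^ 2)) ≤ 1 := exp_le_one_iff.2 (by nlinarith)
        refine (abs_heatWeightDeriv2_le ht.le hθ.1 hθ.2).trans ?_
        nlinarith [exp_pos (-(a * θ ^ 2)), hθ.1, pow_nonneg hθ.1 3, sq_nonneg t]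
    _ = π / 4 + 3 * t * (∫ θ in (0 : ℝ)..π, exp (-(a * θ ^ 2)) * θ ^ 1)
          + 2 * t ^ 2 * ∫ θ in (0 : ℝ)..π, exp (-(a * θ ^ 2)) * θ ^ 3 := by
        rw [integral_add (by apply Continuous.intervalIntegrable; fun_prop)
          ((hint 3).const_mul _), integral_add intervalIntegrable_const ((hint 1).const_mul _),
          integral_const_mul, integral_const_mul, intervalIntegral.integral_const]
        simp only [sub_zero, smul_eq_mul]
        ring
    _ ≤ π / 4 + 3 * t * (1 / (2 * a)) + 2 * t ^ 2 * (1 / (2 * a ^ 2)) := by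
        simp only [pow_one]
        gcongr
        · exact integral_exp_neg_mul_sq_mul_le ha π
        · exact integral_exp_neg_mul_sq_mul_pow_three_le ha π
    _ = π / 4 + 3 * π ^ 2 / 8 + π ^ 4 / 16 := by
        simp only [a]
        field_simp
        ring
    _ ≤ 11 := by
        have hpi2 : π ^ 2 ≤ 9.93 := by nlinarith [pi_lt_d2, pi_gt_three]
        nlinarith [pi_lt_d2, pi_gt_three]

lemma abs_heatKernel1_natCast_succ_sub_le_inv (ht : 0 < t) (n : ℕ) :
    |heatKernel1 t (n + 1) - heatKernel1 t n| ≤ 1 / (2 * t) := by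
  rw [heatKernel1_natCast_succ_sub, abs_mul, abs_neg, abs_of_pos (by positivity : 0 < 2 / π)]
  calc 2 / π * |∫ θ in (0 : ℝ)..π, heatWeight t θ * sin ((n + 1 / 2) * θ)|
      ≤ 2 / π * (π ^ 2 / (16 * t)) := by
        gcongr
        exact (abs_integral_mul_sin_le pi_pos.le
          ((continuous_heatWeight t).intervalIntegrable 0 π) _).trans
          (integral_abs_heatWeight_le ht)
    _ = π / (8 * t) := by
        field_simp
        ring
    _ ≤ 1 / (2 * t) := by
        rw [div_le_div_iff₀ (by positivity) (by positivity)]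
        nlinarith [pi_lt_four]

lemma abs_heatKernel1_natCast_succ_sub_le_div_sq (ht : 0 < t) (n : ℕ) :
    |heatKernel1 t (n + 1) - heatKernel1 t n| ≤ 30 / (n + 1) ^ 2 := by
  rw [heatKernel1_natCast_succ_sub, integral_mul_sin_nat_add_half_mul_eq (hasDerivAt_heatWeight t)
    (hasDerivAt_heatWeightDeriv t) (continuous_heatWeightDeriv2 t) (by simp [heatWeight])
    (by simp [heatWeightDeriv]), neg_div, neg_mul_neg, abs_mul,
    abs_of_pos (by positivity : 0 < 2 / π), abs_div,
    abs_of_pos (by positivity : (0 : ℝ) < (n + 1 / 2) ^ 2)]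
  have hI := (abs_integral_mul_sin_le pi_pos.le
    ((continuous_heatWeightDeriv2 t).intervalIntegrable 0 π) ((n : ℝ) + 1 / 2)).trans
    (integral_abs_heatWeightDeriv2_le ht)
  calc 2 / π * (|∫ θ in (0 : ℝ)..π, heatWeightDeriv2 t θ * sin ((n + 1 / 2) * θ)| / (n + 1 / 2) ^ 2)
      ≤ 2 / π * (11 / (n + 1 / 2) ^ 2) := by gcongr
    _ ≤ 30 / ((n : ℝ) + 1) ^ 2 := by
        rw [mul_div, div_mul_eq_mul_div, div_div, div_le_div_iff₀ (by positivity)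
          (by positivity)]
        have : ((n : ℝ) + 1) ^ 2 ≤ 4 * (n + 1 / 2) ^ 2 := by
          nlinarith [(n.cast_nonneg : (0 : ℝ) ≤ n)]
        nlinarith [mul_le_mul_of_nonneg_right pi_gt_three.le (sq_nonneg ((n : ℝ) + 1 / 2))]

lemma abs_heatKernel1_succ_sub_le_inv (ht : 0 < t) (n : ℤ) :
    |heatKernel1 t (n + 1) - heatKernel1 t n| ≤ 1 / (2 * t) := by
  cases n with
  | ofNat m => exact abs_heatKernel1_natCast_succ_sub_le_inv ht m
  | negSucc m =>
    rw [Int.negSucc_eq, heatKernel1_succ_sub_neg_succ, abs_neg]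
    exact abs_heatKernel1_natCast_succ_sub_le_inv ht m

lemma tsum_ofReal_abs_heatKernel1_natCast_succ_sub_le (ht : 0 < t) :
    ∑' n : ℕ, ENNReal.ofReal |heatKernel1 t (n + 1) - heatKernel1 t n| ≤
      ENNReal.ofReal (121 / (2 * √t)) := by
  refine ENNReal.tsum_le_of_sum_range_le fun m ↦ ?_
  rw [← ENNReal.ofReal_sum_of_nonneg fun _ _ ↦ abs_nonneg _]
  apply ENNReal.ofReal_le_ofReal
  have hst : 0 < √t := sqrt_pos.2 ht
  -- split the sum at `N ≈ √t`, where the two pointwise bounds cross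
  set N := ⌊√t⌋₊
  have hN : (N : ℝ) ≤ √t := Nat.floor_le hst.le
  have hN' : √t ≤ N + 1 := (Nat.lt_floor_add_one _).le
  calc ∑ i ∈ Finset.range m, |heatKernel1 t (i + 1) - heatKernel1 t i|
      ≤ N * (1 / (2 * t)) + 2 * 30 / (N + 1) :=
        sum_range_le_of_le_of_le_div_sq (fun _ ↦ abs_nonneg _)
          (abs_heatKernel1_natCast_succ_sub_le_inv ht)
          (abs_heatKernel1_natCast_succ_sub_le_div_sq ht) N m
    _ ≤ √t * (1 / (2 * t)) + 2 * 30 / √t := by gcongr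
    _ = 121 / (2 * √t) := by
        field_simp
        nlinarith [sq_sqrt ht.le]

lemma lpNorm_one_heatKernel1_succ_sub_le (ht : 0 < t) :
    lpNorm 1 (fun n : ℤ ↦ heatKernel1 t (n + 1) - heatKernel1 t n) ≤
      ENNReal.ofReal (121 / √t) := by
  rw [lpNorm_one, tsum_of_nat_of_neg_add_one ENNReal.summable ENNReal.summable]
  simp only [Real.enorm_eq_ofReal_abs, heatKernel1_succ_sub_neg_succ, abs_neg]
  calc _ ≤ ENNReal.ofReal (121 / (2 * √t)) + ENNReal.ofReal (121 / (2 * √t)) :=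
        add_le_add (tsum_ofReal_abs_heatKernel1_natCast_succ_sub_le ht)
          (tsum_ofReal_abs_heatKernel1_natCast_succ_sub_le ht)
    _ = ENNReal.ofReal (121 / √t) := by
        rw [← ENNReal.ofReal_add (by positivity) (by positivity)]
        ring_nf

lemma lpNorm_top_heatKernel1_succ_sub_le (ht : 0 < t) :
    lpNorm ∞ (fun n : ℤ ↦ heatKernel1 t (n + 1) - heatKernel1 t n) ≤
      ENNReal.ofReal (1 / (2 * t)) := by
  rw [lpNorm_top]
  refine iSup_le fun n ↦ ?_
  rw [Real.enorm_eq_ofReal_abs]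
  exact ENNReal.ofReal_le_ofReal (abs_heatKernel1_succ_sub_le_inv ht n)

end HeatKernelDifference

/-- `ℓ^r` estimate for the forward difference of the one-dimensional heat kernel. -/
theorem stmt12 (r : ℝ≥0∞) (hr : 1 ≤ r) :
    ∃ C : ℝ, 0 < C ∧ ∀ t : ℝ, 0 < t →
      lpNorm r (fun n : ℤ => heatKernel1 t (n + 1) - heatKernel1 t n) ≤
        ENNReal.ofReal (C * t ^ (-(1 / 2 : ℝ) - (1 - (r⁻¹).toReal) / 2)) := by
  refine ⟨121, by norm_num, fun t ht ↦ ?_⟩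
  have hq₁ : r⁻¹.toReal ≤ 1 :=
    ENNReal.toReal_le_of_le_ofReal zero_le_one (by simpa using ENNReal.inv_le_one.2 hr)
  calc _ ≤ lpNorm ∞ (fun n : ℤ ↦ heatKernel1 t (n + 1) - heatKernel1 t n) ^ (1 - r⁻¹.toReal) *
        lpNorm 1 (fun n : ℤ ↦ heatKernel1 t (n + 1) - heatKernel1 t n) ^ r⁻¹.toReal :=
        lpNorm_le_lpNorm_top_rpow_mul_lpNorm_one_rpow _ hr
    _ ≤ ENNReal.ofReal (1 / (2 * t)) ^ (1 - r⁻¹.toReal) *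
        ENNReal.ofReal (121 / √t) ^ r⁻¹.toReal := by
        gcongr
        · exact lpNorm_top_heatKernel1_succ_sub_le ht
        · exact lpNorm_one_heatKernel1_succ_sub_le ht
    _ ≤ _ := ofReal_one_div_two_mul_rpow_mul_ofReal_div_sqrt_rpow_le ht ENNReal.toReal_nonneg hq₁
        (by norm_num)
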